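/- Let m_T < m < 1. Then there exist x₁, x₂ ∈ [0, 2π] with x₁ ≠ x₂ such that γ_w(x₁|m) = γ_w(x₂|m). -/

import Mathlib

open Real MeasureTheory Set

noncomputable section

abbrev E2 := EuclideanSpace ℝ (Fin 2)

/-- The point of the Euclidean plane with coordinates `(a, b)`. -/
def mkE2 (a b : ℝ) : E2 := WithLp.toLp 2 ![a, b]
/-- Incomplete elliptic integral of the first kind `F(x,m)`. -/
def Fell (x m : ℝ) : ℝ := ∫ θ in (0:ℝ)..x, 1 / Real.sqrt (1 - m * Real.sin θ ^ 2)

/-- Incomplete elliptic integral of the second kind `E(x,m)`. -/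
def Eell (x m : ℝ) : ℝ := ∫ θ in (0:ℝ)..x, Real.sqrt (1 - m * Real.sin θ ^ 2)

/-- Complete elliptic integral of the first kind `K(m)`. -/
def Kc (m : ℝ) : ℝ := Fell (Real.pi / 2) m

/-- Complete elliptic integral of the second kind `E(m)`. -/
def Ec (m : ℝ) : ℝ := Eell (Real.pi / 2) m

/-- `α(m) = arcsin √(1/(2m))`. -/
def alph (m : ℝ) : ℝ := Real.arcsin (Real.sqrt (1 / (2 * m)))

/-- `G(x,m) = ∫₀ˣ (1 − 2m sin²θ)(1 − m sin²θ)^{−1/2} dθ = 2E(x,m) − F(x,m)`. -/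
def Gw (x m : ℝ) : ℝ :=
  ∫ θ in (0:ℝ)..x, (1 - 2 * m * Real.sin θ ^ 2) / Real.sqrt (1 - m * Real.sin θ ^ 2)

/-- `f(m) = ∫₀^{π−α(m)} (1 − 2m sin²θ)(1 − m sin²θ)^{−1/2} dθ`; its unique zero is `m_T`. -/
def fT (m : ℝ) : ℝ := Gw (Real.pi - alph m) m
/-- The wavelike parametrization `γ_w(x|m) = (G(x,m), −2√m cos x)`. -/
def gammaW (m : ℝ) : ℝ → E2 := fun x => mkE2 (Gw x m) (-2 * Real.sqrt m * Real.cos x)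

/-!
The integrand of `G(·, m)` is even and `π`-periodic, so `G(2π - x) = 2G(π) - G(x)`, while
`cos (2π - x) = cos x`. Hence `γ_w(x) = γ_w(2π - x)` as soon as `G(x) = G(π)`, and it remains
to find such an `x ∈ [0, π)`. Since `G(π - y) = G(π) - G(y)`, this follows from the
intermediate value theorem once `G(y₁) ≥ 0` and `G(y₂) ≤ 0` for some `y₁, y₂ ∈ (0, π]`.
For `y₁ = π/4` the integrand is positive on `[0, y₁]`; for `y₂ = π - α(m_T)` we use that the
integrand decreases in `m`, so `G(y₂, m) ≤ G(y₂, m_T) = f(m_T) = 0`.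
-/

def gwIntegrand (m θ : ℝ) : ℝ :=
  (1 - 2 * m * Real.sin θ ^ 2) / Real.sqrt (1 - m * Real.sin θ ^ 2)

lemma Gw_eq_integral (x m : ℝ) : Gw x m = ∫ θ in (0:ℝ)..x, gwIntegrand m θ := rfl

lemma one_sub_mul_sin_sq_pos {m : ℝ} (hm : m < 1) (θ : ℝ) : 0 < 1 - m * Real.sin θ ^ 2 := by
  rcases le_or_gt m 0 with hm0 | hm0
  · nlinarith [sq_nonneg (Real.sin θ)]
  · nlinarith [Real.sin_sq_le_one θ]

lemma continuous_gwIntegrand {m : ℝ} (hm : m < 1) : Continuous (gwIntegrand m) :=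
  Continuous.div (by fun_prop) (by fun_prop)
    fun θ => (Real.sqrt_pos.mpr (one_sub_mul_sin_sq_pos hm θ)).ne'

lemma gwIntegrand_neg (m θ : ℝ) : gwIntegrand m (-θ) = gwIntegrand m θ := by
  simp [gwIntegrand, Real.sin_neg]

lemma gwIntegrand_periodic (m : ℝ) : Function.Periodic (gwIntegrand m) π := by
  intro θ
  simp [gwIntegrand, Real.sin_add_pi]

lemma two_mul_sub_one_div_sqrt_le {u v : ℝ} (hu : 0 < u) (huv : u ≤ v) :
    (2 * u - 1) / √u ≤ (2 * v - 1) / √v := by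
  have hsu : 0 < √u := Real.sqrt_pos.mpr hu
  have hsv : 0 < √v := Real.sqrt_pos.mpr (hu.trans_le huv)
  have split : ∀ w, 0 < w → (2 * w - 1) / √w = 2 * √w - 1 / √w := fun w hw => by
    field_simp
    rw [Real.sq_sqrt hw.le]
  rw [split u hu, split v (hu.trans_le huv)]
  exact sub_le_sub (by gcongr) (one_div_le_one_div_of_le hsu (Real.sqrt_le_sqrt huv))

lemma gwIntegrand_anti {μ m : ℝ} (hμm : μ ≤ m) (hm : m < 1) (θ : ℝ) :
    gwIntegrand m θ ≤ gwIntegrand μ θ := by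
  have key := two_mul_sub_one_div_sqrt_le (one_sub_mul_sin_sq_pos hm θ)
    (by nlinarith [sq_nonneg (Real.sin θ)] :
      1 - m * Real.sin θ ^ 2 ≤ 1 - μ * Real.sin θ ^ 2)
  unfold gwIntegrand
  convert key using 2 <;> ring

lemma Gw_anti {μ m x : ℝ} (hμm : μ ≤ m) (hm : m < 1) (hx : 0 ≤ x) : Gw x m ≤ Gw x μ :=
  intervalIntegral.integral_mono_on hx ((continuous_gwIntegrand hm).intervalIntegrable _ _)
    ((continuous_gwIntegrand (hμm.trans_lt hm)).intervalIntegrable _ _)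
    fun θ _ => gwIntegrand_anti hμm hm θ

lemma continuous_Gw {m : ℝ} (hm : m < 1) : Continuous fun x => Gw x m :=
  intervalIntegral.continuous_primitive
    (fun _ _ => (continuous_gwIntegrand hm).intervalIntegrable _ _) 0

lemma Gw_neg (x m : ℝ) : Gw (-x) m = -Gw x m := by
  have h := intervalIntegral.integral_comp_neg (a := 0) (b := -x) (gwIntegrand m)
  simp only [gwIntegrand_neg, neg_neg, neg_zero] at h
  rw [Gw_eq_integral, Gw_eq_integral, h, intervalIntegral.integral_symm]

lemma Gw_add_pi {m : ℝ} (hm : m < 1) (x : ℝ) : Gw (x + π) m = Gw x m + Gw π m := by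
  have hint := fun a b => (continuous_gwIntegrand hm).intervalIntegrable (μ := volume) a b
  have hperiod := (gwIntegrand_periodic m).intervalIntegral_add_eq x 0
  rw [zero_add] at hperiod
  rw [Gw_eq_integral, Gw_eq_integral, Gw_eq_integral, ← hperiod,
    intervalIntegral.integral_add_adjacent_intervals (hint 0 x) (hint x (x + π))]

lemma Gw_pi_sub {m : ℝ} (hm : m < 1) (x : ℝ) : Gw (π - x) m = Gw π m - Gw x m := by
  rw [sub_eq_neg_add, Gw_add_pi hm, Gw_neg]
  ring

lemma Gw_two_pi_sub {m : ℝ} (hm : m < 1) (x : ℝ) :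
    Gw (2 * π - x) m = 2 * Gw π m - Gw x m := by
  rw [show 2 * π - x = (π - x) + π by ring, Gw_add_pi hm, Gw_pi_sub hm]
  ring

lemma Gw_pi_div_four_nonneg {m : ℝ} (hm : m < 1) : 0 ≤ Gw (π / 4) m := by
  refine intervalIntegral.integral_nonneg (by positivity) fun θ hθ => ?_
  have hcos : 0 ≤ Real.cos (2 * θ) :=
    Real.cos_nonneg_of_mem_Icc ⟨by linarith [hθ.1, pi_pos], by linarith [hθ.2]⟩
  have hsin : Real.sin θ ^ 2 ≤ 1 / 2 := by
    rw [Real.sin_sq_eq_half_sub]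
    linarith
  refine div_nonneg ?_ (Real.sqrt_nonneg _)
  nlinarith [sq_nonneg (Real.sin θ)]

lemma gammaW_two_pi_sub {m x : ℝ} (hm : m < 1) (hx : Gw x m = Gw π m) :
    gammaW m (2 * π - x) = gammaW m x := by
  simp only [gammaW, Gw_two_pi_sub hm, hx, Real.cos_two_pi_sub]
  ring_nf

lemma exists_Gw_eq_Gw_pi {mT m : ℝ} (hmTzero : fT mT = 0) (hm0 : mT < m) (hm1 : m < 1) :
    ∃ x ∈ Ico 0 π, Gw x m = Gw π m := by
  have hα₀ : 0 ≤ alph mT := Real.arcsin_nonneg.mpr (Real.sqrt_nonneg _)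
  have hα₁ : alph mT ≤ π / 2 := Real.arcsin_le_pi_div_two _
  have hupper : Gw π m ≤ Gw (alph mT) m := by
    have := Gw_anti hm0.le hm1 (by linarith : 0 ≤ π - alph mT)
    rw [← fT, hmTzero, Gw_pi_sub hm1] at this
    linarith
  have hlower : Gw (π - π / 4) m ≤ Gw π m := by
    rw [Gw_pi_sub hm1]
    linarith [Gw_pi_div_four_nonneg hm1]
  obtain ⟨x, hx, hGx⟩ := intermediate_value_uIcc (continuous_Gw hm1).continuousOn
    (Set.mem_uIcc.mpr (Or.inr ⟨hlower, hupper⟩))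
  have hsub : uIcc (alph mT) (π - π / 4) ⊆ Icc 0 (π - π / 4) :=
    uIcc_subset_Icc ⟨hα₀, by linarith⟩ ⟨by linarith [pi_pos], le_rfl⟩
  exact ⟨x, ⟨(hsub hx).1, by linarith [(hsub hx).2, pi_pos]⟩, hGx⟩

theorem stmt12_general (mT : ℝ) (hmTzero : fT mT = 0)
    (m : ℝ) (hm0 : mT < m) (hm1 : m < 1) :
    ∃ x₁ ∈ Set.Icc (0:ℝ) (2 * Real.pi), ∃ x₂ ∈ Set.Icc (0:ℝ) (2 * Real.pi),
      x₁ ≠ x₂ ∧ gammaW m x₁ = gammaW m x₂ := by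
  obtain ⟨x, ⟨hx0, hxπ⟩, hGx⟩ := exists_Gw_eq_Gw_pi hmTzero hm0 hm1
  refine ⟨x, ⟨hx0, by linarith⟩, 2 * π - x, ⟨by linarith, by linarith⟩, by linarith,
    (gammaW_two_pi_sub hm1 hGx).symm⟩

/-- Lemma 2.19: for `m_T < m < 1` the wavelike parametrization has a
self-intersection with parameters in `[0, 2π]`. -/
theorem stmt12 (mT : ℝ) (hmT : mT ∈ Set.Ioo (1/2 : ℝ) 1) (hmTzero : fT mT = 0)
    (m : ℝ) (hm0 : mT < m) (hm1 : m < 1) :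
    ∃ x₁ ∈ Set.Icc (0:ℝ) (2 * Real.pi), ∃ x₂ ∈ Set.Icc (0:ℝ) (2 * Real.pi),
      x₁ ≠ x₂ ∧ gammaW m x₁ = gammaW m x₂ :=
  stmt12_general mT hmTzero m hm0 hm1
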